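/- arXiv:1605.01430 — 2 statements merged into one kernel-verified Lean document; each statement's English description precedes it below -/
import Mathlib

section
/- Let V be a finite-dimensional complex inner product space and let P₁, P₂ be the orthogonal projections onto subspaces H₁, H₂ ⊆ V. Then |det(P₁ restricted to Im(P₂P₁), viewed as a map Im(P₂P₁) → Im(P₁P₂))| = |det(P₂ restricted to Im(P₁P₂), viewed as a map Im(P₁P₂) → Im(P₂P₁))| = (det*(Id − P₁ − P₂ + P₁P₂ + P₂P₁))^{1/4}, where det*(A) denotes the product of the nonzero eigenvalues of the positive semidefinite operator A, and det of a linear map between inner product spaces of equal dimension is computed in orthonormal bases (so its absolute value is well defined). -/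
open Module LinearMap Submodule
open scoped Matrix
local notation "⟪" x ", " y "⟫" => @inner ℂ _ _ x y

/-- `det*`: the product of the nonzero eigenvalues of a symmetric operator. -/
noncomputable def detStar {V : Type*} [NormedAddCommGroup V] [InnerProductSpace ℂ V]
    [FiniteDimensional ℂ V] (T : V →ₗ[ℂ] V) (hT : T.IsSymmetric) : ℝ :=
  ∏ i ∈ Finset.univ.filter
      (fun i => hT.eigenvalues (n := Module.finrank ℂ V) rfl i ≠ 0),
    hT.eigenvalues (n := Module.finrank ℂ V) rfl i

set_option linter.unusedSectionVars false
set_option maxHeartbeats 2000000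

section Generic
variable {V : Type*} [NormedAddCommGroup V] [InnerProductSpace ℂ V] [FiniteDimensional ℂ V]

lemma aux_toMatrix_diagonal {ι : Type*} [Fintype ι] [DecidableEq ι] (c : Basis ι ℂ V)
    (g : V →ₗ[ℂ] V) (ν : ι → ℂ) (h : ∀ i, g (c i) = ν i • c i) :
    LinearMap.toMatrix c c g = Matrix.diagonal ν := by
  ext i j
  rw [LinearMap.toMatrix_apply, h, map_smul, Finsupp.smul_apply, Basis.repr_self,
    Finsupp.single_apply, Matrix.diagonal_apply]
  by_cases hij : i = j
  · subst hij; simp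
  · simp [hij, Ne.symm hij]

lemma aux_finrank_eigenspace (B : V →ₗ[ℂ] V) (hB : B.IsSymmetric) (l : ℝ) :
    finrank ℂ (Module.End.eigenspace B (l : ℂ)) =
      (Finset.univ.filter (fun i => hB.eigenvalues (n := finrank ℂ V) rfl i = l)).card := by
  classical
  set n := finrank ℂ V
  set b := hB.eigenvectorBasis (n := n) rfl with hb
  set μ := hB.eigenvalues (n := n) rfl with hμ
  have hbev : ∀ i, B (b i) = (μ i : ℂ) • b i := fun i => hB.apply_eigenvectorBasis rfl i
  set S : Set (Fin n) := {i | μ i = l} with hS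
  have key : Module.End.eigenspace B (l : ℂ) =
      Submodule.span ℂ (Set.range (fun i : S => b i)) := by
    apply le_antisymm
    · intro v hv
      have hBv : B v = (l : ℂ) • v := Module.End.mem_eigenspace_iff.mp hv
      have hrepr : ∀ i : Fin n, μ i ≠ l → b.repr v i = 0 := by
        intro i hi
        have h1 : ⟪b i, B v⟫ = (l : ℂ) * ⟪b i, v⟫ := by rw [hBv, inner_smul_right]
        have h2 : ⟪b i, B v⟫ = (μ i : ℂ) * ⟪b i, v⟫ := by
          rw [← hB (b i) v, hbev, inner_smul_left, Complex.conj_ofReal]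
        have h3 : ((μ i : ℂ) - l) * ⟪b i, v⟫ = 0 := by rw [sub_mul, h2.symm.trans h1, sub_self]
        have h4 : (μ i : ℂ) - l ≠ 0 := by
          simp only [ne_eq, sub_eq_zero]
          exact_mod_cast hi
        have := (mul_eq_zero.mp h3).resolve_left h4
        rwa [b.repr_apply_apply]
      have hv' : v = ∑ i ∈ Finset.univ.filter (fun i => μ i = l), b.repr v i • b i := by
        conv_lhs => rw [← b.sum_repr v]
        rw [← Finset.sum_filter_add_sum_filter_not Finset.univ (fun i => μ i = l)]
        have : ∑ i ∈ Finset.univ.filter (fun i => ¬ μ i = l), b.repr v i • b i = 0 := by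
          apply Finset.sum_eq_zero
          intro i hi
          rw [hrepr i (Finset.mem_filter.mp hi).2, zero_smul]
        rw [this, add_zero]
      rw [hv']
      apply Submodule.sum_mem
      intro i hi
      apply Submodule.smul_mem
      apply Submodule.subset_span
      exact ⟨⟨i, (Finset.mem_filter.mp hi).2⟩, rfl⟩
    · rw [Submodule.span_le]
      rintro x ⟨⟨i, hi⟩, rfl⟩
      rw [SetLike.mem_coe, Module.End.mem_eigenspace_iff, hbev i, hi]
  rw [key, finrank_span_eq_card]
  · simp only [← Fintype.card_coe]
    apply Fintype.card_congr
    exact Equiv.subtypeEquiv (Equiv.refl _) (by intro i; simp [S])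
  · exact b.orthonormal.linearIndependent.comp _ Subtype.val_injective
end Generic

section Pairing
variable {V : Type*} [NormedAddCommGroup V] [InnerProductSpace ℂ V] [FiniteDimensional ℂ V]
variable (P₁ P₂ A : V →ₗ[ℂ] V)
variable (h₁ : ∀ v, P₁ (P₁ v) = P₁ v) (h₂ : ∀ v, P₂ (P₂ v) = P₂ v)
variable (hA : ∀ v, A v = v - P₁ v - P₂ v + P₁ (P₂ v) + P₂ (P₁ v))

local notation "T₁" => P₂ ∘ₗ P₁ ∘ₗ P₂

include h₁ h₂ hA

lemma fA2 : ∀ v, A (P₂ v) = (T₁) v := by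
  intro v
  simp only [hA, h₂, LinearMap.comp_apply]
  abel

lemma f2A : ∀ v, P₂ (A v) = (T₁) v := by
  intro v
  simp only [hA, map_add, map_sub, h₂, LinearMap.comp_apply]
  abel

lemma fA1 : ∀ v, A (P₁ v) = P₁ (A v) := by
  intro v
  simp only [hA, map_add, map_sub, h₁, h₂, LinearMap.comp_apply]
  abel

lemma fAP2comm : ∀ v, A (P₂ v) = P₂ (A v) := by
  intro v; rw [fA2 P₁ P₂ A h₁ h₂ hA, f2A P₁ P₂ A h₁ h₂ hA]

-- membership facts for eigenvectors of T₁
lemma memT₁_fix {l : ℝ} (hl0 : (l : ℂ) ≠ 0) {v : V} (hv : (T₁) v = (l : ℂ) • v) :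
    P₂ v = v ∧ A v = (l : ℂ) • v := by
  have hp : P₂ v = v := by
    have h' : P₂ ((T₁) v) = (T₁) v := by simp only [LinearMap.comp_apply, h₂]
    rw [hv, map_smul] at h'
    have := smul_right_injective V hl0 h'
    exact this
  refine ⟨hp, ?_⟩
  calc A v = A (P₂ v) := by rw [hp]
  _ = (T₁) v := fA2 P₁ P₂ A h₁ h₂ hA v
  _ = (l:ℂ) • v := hv

lemma memT₂_fix {l : ℝ} (hl0 : (l : ℂ) ≠ 0) {v : V} (hv : (A - T₁) v = (l : ℂ) • v) :
    P₂ v = 0 ∧ A v = (l : ℂ) • v ∧ (T₁) v = 0 := by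
  have hv' : A v - (T₁) v = (l:ℂ) • v := by simpa using hv
  have hp : P₂ v = 0 := by
    have h' : P₂ (A v) - P₂ ((T₁) v) = (l:ℂ) • P₂ v := by
      rw [← map_smul, ← hv', map_sub]
    rw [f2A P₁ P₂ A h₁ h₂ hA] at h'
    have h'' : P₂ ((T₁) v) = (T₁) v := by simp only [LinearMap.comp_apply, h₂]
    rw [h''] at h'
    have : (0:V) = (l:ℂ) • P₂ v := by rw [← h']; abel
    have := smul_right_injective V hl0 (by rw [← this, smul_zero] : (l:ℂ) • (0:V) = (l:ℂ) • P₂ v)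
    exact this.symm
  have hT1 : (T₁) v = 0 := by
    simp only [LinearMap.comp_apply, hp, map_zero]
  refine ⟨hp, ?_, hT1⟩
  rw [← hv']; rw [hT1]; abel

lemma inj1 {l : ℝ} (hl0 : (l : ℂ) ≠ 0) (hl1 : (l : ℂ) ≠ 1) :
    finrank ℂ (Module.End.eigenspace (T₁) (l : ℂ)) ≤
    finrank ℂ (Module.End.eigenspace (A - T₁) (l : ℂ)) := by
  set E₁ := Module.End.eigenspace (T₁) (l : ℂ)
  set E₂ := Module.End.eigenspace (A - T₁) (l : ℂ)
  have hmap : ∀ v ∈ E₁, (P₂ ∘ₗ P₁ - P₁) v ∈ E₂ := by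
    intro v hv
    have hv' : (T₁) v = (l:ℂ) • v := Module.End.mem_eigenspace_iff.mp hv
    obtain ⟨hp₂v, hAv⟩ := memT₁_fix P₁ P₂ A h₁ h₂ hA hl0 hv'
    rw [Module.End.mem_eigenspace_iff]
    have hw : (P₂ ∘ₗ P₁ - P₁) v = P₂ (P₁ v) - P₁ v := by simp
    have hP₂w : P₂ (P₂ (P₁ v) - P₁ v) = 0 := by rw [map_sub, h₂]; abel
    have hT₁w : (T₁) (P₂ (P₁ v) - P₁ v) = 0 := by
      simp only [LinearMap.comp_apply, hP₂w, map_zero]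
    have hAw : A (P₂ (P₁ v) - P₁ v) = (l:ℂ) • (P₂ (P₁ v) - P₁ v) := by
      rw [map_sub, fAP2comm P₁ P₂ A h₁ h₂ hA, fA1 P₁ P₂ A h₁ h₂ hA, hAv, map_smul,
        map_smul, smul_sub]
    rw [hw, LinearMap.sub_apply, hAw, hT₁w]
    abel
  have hinj : ∀ v ∈ E₁, (P₂ ∘ₗ P₁ - P₁) v = 0 → v = 0 := by
    intro v hv hw
    have hv' : (T₁) v = (l:ℂ) • v := Module.End.mem_eigenspace_iff.mp hv
    obtain ⟨hp₂v, hAv⟩ := memT₁_fix P₁ P₂ A h₁ h₂ hA hl0 hv'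
    have hw' : P₂ (P₁ v) = P₁ v := by
      have h0 : P₂ (P₁ v) - P₁ v = 0 := by simpa using hw
      have := sub_eq_zero.mp h0
      exact this
    have hlv : (l:ℂ) • v = P₁ v := by
      calc (l:ℂ) • v = (T₁) v := hv'.symm
      _ = P₂ (P₁ v) := by rw [LinearMap.comp_apply, LinearMap.comp_apply, hp₂v]
      _ = P₁ v := hw'
    have hP₁v : P₁ v = 0 := by
      have h5 : (l:ℂ) • P₁ v = P₁ v := by
        calc (l:ℂ) • P₁ v = P₁ ((l:ℂ) • v) := (map_smul P₁ _ v).symm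
        _ = P₁ (P₁ v) := by rw [hlv]
        _ = P₁ v := h₁ v
      have h6 : ((l:ℂ) - 1) • P₁ v = 0 := by rw [sub_smul, one_smul, h5, sub_self]
      have h7 : ((l:ℂ) - 1) ≠ 0 := sub_ne_zero.mpr hl1
      exact (smul_eq_zero.mp h6).resolve_left h7
    have : (l:ℂ) • v = 0 := by rw [hlv, hP₁v]
    exact (smul_eq_zero.mp this).resolve_left hl0
  let F : E₁ →ₗ[ℂ] E₂ :=
    LinearMap.codRestrict E₂ ((P₂ ∘ₗ P₁ - P₁) ∘ₗ E₁.subtype) (fun x => hmap x x.2)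
  have hFinj : Function.Injective F := by
    rw [injective_iff_map_eq_zero]
    intro a ha
    have : (P₂ ∘ₗ P₁ - P₁) (a : V) = 0 := by
      have := congrArg (Subtype.val) ha
      exact this
    exact Subtype.ext (hinj a a.2 this)
  exact LinearMap.finrank_le_finrank_of_injective hFinj

lemma inj2 {l : ℝ} (hl0 : (l : ℂ) ≠ 0) (hl1 : (l : ℂ) ≠ 1) :
    finrank ℂ (Module.End.eigenspace (A - T₁) (l : ℂ)) ≤
    finrank ℂ (Module.End.eigenspace (T₁) (l : ℂ)) := by
  set E₂ := Module.End.eigenspace (A - T₁) (l : ℂ)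
  set E₁ := Module.End.eigenspace (T₁) (l : ℂ)
  have hmap : ∀ v ∈ E₂, (P₂ ∘ₗ P₁) v ∈ E₁ := by
    intro v hv
    have hv' : (A - T₁) v = (l:ℂ) • v := Module.End.mem_eigenspace_iff.mp hv
    obtain ⟨hp₂v, hAv, hT1v⟩ := memT₂_fix P₁ P₂ A h₁ h₂ hA hl0 hv'
    rw [Module.End.mem_eigenspace_iff]
    have : (T₁) (P₂ (P₁ v)) = (l:ℂ) • P₂ (P₁ v) := by
      calc (T₁) (P₂ (P₁ v)) = A (P₂ (P₂ (P₁ v))) := (fA2 P₁ P₂ A h₁ h₂ hA _).symm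
      _ = A (P₂ (P₁ v)) := by rw [h₂]
      _ = P₂ (A (P₁ v)) := fAP2comm P₁ P₂ A h₁ h₂ hA _
      _ = P₂ (P₁ (A v)) := by rw [fA1 P₁ P₂ A h₁ h₂ hA]
      _ = (l:ℂ) • P₂ (P₁ v) := by rw [hAv, map_smul, map_smul]
    simpa using this
  have hinj : ∀ v ∈ E₂, (P₂ ∘ₗ P₁) v = 0 → v = 0 := by
    intro v hv hw
    have hv' : (A - T₁) v = (l:ℂ) • v := Module.End.mem_eigenspace_iff.mp hv
    obtain ⟨hp₂v, hAv, hT1v⟩ := memT₂_fix P₁ P₂ A h₁ h₂ hA hl0 hv'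
    have hw' : P₂ (P₁ v) = 0 := by simpa using hw
    have hP₁v : P₁ v = v - (l:ℂ) • v := by
      have : (l:ℂ) • v = v - P₁ v - P₂ v + P₁ (P₂ v) + P₂ (P₁ v) := by rw [← hA, hAv]
      rw [hp₂v, hw', map_zero] at this
      have : (l:ℂ) • v = v - P₁ v := by rw [this]; abel
      rw [this]; abel
    have h5 : P₁ v = P₁ v - (l:ℂ) • P₁ v := by
      calc P₁ v = P₁ (P₁ v) := (h₁ v).symm
      _ = P₁ (v - (l:ℂ) • v) := by rw [← hP₁v]
      _ = P₁ v - (l:ℂ) • P₁ v := by rw [map_sub, map_smul]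
    have h6 : (l:ℂ) • P₁ v = 0 := by
      have := sub_eq_zero.mpr h5.symm
      simpa using this.symm
    have hP₁v0 : P₁ v = 0 := (smul_eq_zero.mp h6).resolve_left hl0
    have h7 : v - (l:ℂ) • v = 0 := by rw [← hP₁v, hP₁v0]
    have h8 : ((1:ℂ) - l) • v = 0 := by rw [sub_smul, one_smul]; exact h7
    have h9 : ((1:ℂ) - l) ≠ 0 := by
      intro h; apply hl1; rw [← sub_eq_zero]; rw [← neg_eq_zero, neg_sub]; exact h
    exact (smul_eq_zero.mp h8).resolve_left h9
  let F : E₂ →ₗ[ℂ] E₁ :=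
    LinearMap.codRestrict E₁ ((P₂ ∘ₗ P₁) ∘ₗ E₂.subtype) (fun x => hmap x x.2)
  have hFinj : Function.Injective F := by
    rw [injective_iff_map_eq_zero]
    intro a ha
    have : (P₂ ∘ₗ P₁) (a : V) = 0 := by
      have := congrArg (Subtype.val) ha
      exact this
    exact Subtype.ext (hinj a a.2 this)
  exact LinearMap.finrank_le_finrank_of_injective hFinj

lemma sumEig {l : ℝ} (hl0 : (l : ℂ) ≠ 0) :
    finrank ℂ (Module.End.eigenspace A (l : ℂ)) =
      finrank ℂ (Module.End.eigenspace (T₁) (l : ℂ)) +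
      finrank ℂ (Module.End.eigenspace (A - T₁) (l : ℂ)) := by
  set E₁ := Module.End.eigenspace (T₁) (l : ℂ)
  set E₂ := Module.End.eigenspace (A - T₁) (l : ℂ)
  have hinf : E₁ ⊓ E₂ = ⊥ := by
    rw [eq_bot_iff]
    rintro v ⟨hv1, hv2⟩
    have h1 := (memT₁_fix P₁ P₂ A h₁ h₂ hA hl0 (Module.End.mem_eigenspace_iff.mp hv1)).1
    have h2 := (memT₂_fix P₁ P₂ A h₁ h₂ hA hl0 (Module.End.mem_eigenspace_iff.mp hv2)).1
    have : v = 0 := by rw [← h1, h2]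
    simp [this]
  have hsup : E₁ ⊔ E₂ = Module.End.eigenspace A (l : ℂ) := by
    apply le_antisymm
    · apply sup_le
      · intro v hv
        rw [Module.End.mem_eigenspace_iff]
        exact (memT₁_fix P₁ P₂ A h₁ h₂ hA hl0 (Module.End.mem_eigenspace_iff.mp hv)).2
      · intro v hv
        rw [Module.End.mem_eigenspace_iff]
        exact (memT₂_fix P₁ P₂ A h₁ h₂ hA hl0 (Module.End.mem_eigenspace_iff.mp hv)).2.1
    · intro v hv
      have hAv : A v = (l:ℂ) • v := Module.End.mem_eigenspace_iff.mp hv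
      have hT1P2 : (T₁) (P₂ v) = (l:ℂ) • P₂ v := by
        calc (T₁) (P₂ v) = A (P₂ (P₂ v)) := (fA2 P₁ P₂ A h₁ h₂ hA _).symm
        _ = A (P₂ v) := by rw [h₂]
        _ = P₂ (A v) := fAP2comm P₁ P₂ A h₁ h₂ hA _
        _ = (l:ℂ) • P₂ v := by rw [hAv, map_smul]
      have hT1v : (T₁) v = (l:ℂ) • P₂ v := by
        calc (T₁) v = P₂ (A v) := (f2A P₁ P₂ A h₁ h₂ hA v).symm
        _ = (l:ℂ) • P₂ v := by rw [hAv, map_smul]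
      have hmem1 : P₂ v ∈ E₁ := Module.End.mem_eigenspace_iff.mpr hT1P2
      have hmem2 : v - P₂ v ∈ E₂ := by
        rw [Module.End.mem_eigenspace_iff]
        have hT1sub : (T₁) (v - P₂ v) = 0 := by
          rw [map_sub]
          have : (T₁) (P₂ v) = (T₁) v := by rw [hT1P2, hT1v]
          rw [this, sub_self]
        have hAsub : A (v - P₂ v) = (l:ℂ) • v - (T₁) v := by
          rw [map_sub, hAv, fA2 P₁ P₂ A h₁ h₂ hA]
        rw [LinearMap.sub_apply, hAsub, hT1sub, sub_zero, hT1v, smul_sub]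
      have : v = P₂ v + (v - P₂ v) := by abel
      rw [this]
      exact Submodule.add_mem_sup hmem1 hmem2
  have := Submodule.finrank_sup_add_finrank_inf_eq E₁ E₂
  rw [hinf, hsup] at this
  simp only [finrank_bot] at this
  omega

end Pairing

section MS
variable {α β : Type*} [Fintype α] [Fintype β]

open scoped Classical in
noncomputable def msOf (f : α → ℝ) : Multiset ℝ :=
  ((Finset.univ.filter (fun i => f i ≠ 0 ∧ f i ≠ 1)).val.map f)

open scoped Classical in
lemma msOf_count (f : α → ℝ) (x : ℝ) :
    Multiset.count x (msOf f) =
      (if x = 0 ∨ x = 1 then 0 else (Finset.univ.filter (fun i => f i = x)).card) := by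
  rw [msOf, Multiset.count_map, ← Finset.filter_val, Finset.filter_filter]
  rw [Finset.card_val]
  split_ifs with h
  · rw [Finset.card_eq_zero, Finset.filter_eq_empty_iff]
    rintro a -
    rintro ⟨⟨h0, h1⟩, rfl⟩
    rcases h with h | h
    · exact h0 h
    · exact h1 h
  · push_neg at h
    congr 1
    apply Finset.filter_congr
    rintro a -
    constructor
    · rintro ⟨-, rfl⟩; rfl
    · rintro rfl
      exact ⟨⟨fun hh => h.1 hh, fun hh => h.2 hh⟩, rfl⟩

open scoped Classical in
lemma prod_filter_ne_zero_eq_msOf_prod (f : α → ℝ) :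
    (∏ i ∈ Finset.univ.filter (fun i => f i ≠ 0), f i) = (msOf f).prod := by
  rw [msOf, ← Finset.prod_eq_multiset_prod]
  rw [← Finset.prod_filter_mul_prod_filter_not (Finset.univ.filter (fun i => f i ≠ 0))
    (fun i => f i ≠ 1) f]
  rw [Finset.filter_filter]
  have h2 : ∏ i ∈ (Finset.univ.filter (fun i => f i ≠ 0)).filter (fun i => ¬ f i ≠ 1), f i = 1 := by
    apply Finset.prod_eq_one
    intro i hi
    have := (Finset.mem_filter.mp hi).2
    rwa [not_not] at this
  rw [h2, mul_one]
end MS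

lemma aux_unitary_det {V : Type*} [NormedAddCommGroup V] [InnerProductSpace ℂ V]
    [FiniteDimensional ℂ V] {ι : Type*} [Fintype ι] [DecidableEq ι]
    (u u' : OrthonormalBasis ι ℂ V) :
    ‖(u.toBasis.toMatrix ⇑u'.toBasis).det‖ = 1 := by
  have h := u.det_to_matrix_orthonormalBasis u'
  rw [Basis.det_apply] at h
  simpa using h

theorem statement0 {V : Type*} [NormedAddCommGroup V] [InnerProductSpace ℂ V]
    [FiniteDimensional ℂ V] (H₁ H₂ : Submodule ℂ V)
    (P₁ P₂ A : V →ₗ[ℂ] V)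
    (hP₁ : ∀ v : V, P₁ v = (orthogonalProjection H₁ v : V))
    (hP₂ : ∀ v : V, P₂ v = (orthogonalProjection H₂ v : V))
    (hAdef : A = LinearMap.id - P₁ - P₂ + P₁ ∘ₗ P₂ + P₂ ∘ₗ P₁)
    (hAsym : A.IsSymmetric)
    (f₁ : ↥(LinearMap.range (P₂ ∘ₗ P₁)) →ₗ[ℂ] ↥(LinearMap.range (P₁ ∘ₗ P₂)))
    (hf₁ : ∀ x, (f₁ x : V) = P₁ (x : V))
    (f₂ : ↥(LinearMap.range (P₁ ∘ₗ P₂)) →ₗ[ℂ] ↥(LinearMap.range (P₂ ∘ₗ P₁)))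
    (hf₂ : ∀ x, (f₂ x : V) = P₂ (x : V))
    (ι : Type) [Fintype ι] [DecidableEq ι]
    (b₁ b₁' : OrthonormalBasis ι ℂ ↥(LinearMap.range (P₂ ∘ₗ P₁)))
    (b₂ b₂' : OrthonormalBasis ι ℂ ↥(LinearMap.range (P₁ ∘ₗ P₂))) :
    ‖(LinearMap.toMatrix b₁.toBasis b₂.toBasis f₁).det‖
        = ‖(LinearMap.toMatrix b₂'.toBasis b₁'.toBasis f₂).det‖ ∧
    ‖(LinearMap.toMatrix b₁.toBasis b₂.toBasis f₁).det‖
        = detStar A hAsym ^ ((1 : ℝ) / 4) := by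
  classical
  -- basic projection facts
  have hi₁ : ∀ v, P₁ (P₁ v) = P₁ v := by
    intro v
    rw [hP₁ (P₁ v), hP₁ v]
    exact congrArg _ (orthogonalProjection_mem_subspace_eq_self _)
  have hi₂ : ∀ v, P₂ (P₂ v) = P₂ v := by
    intro v
    rw [hP₂ (P₂ v), hP₂ v]
    exact congrArg _ (orthogonalProjection_mem_subspace_eq_self _)
  have hs₁ : ∀ u v : V, ⟪P₁ u, v⟫ = ⟪u, P₁ v⟫ := by
    intro u v
    rw [hP₁ u, hP₁ v]
    exact Submodule.inner_starProjection_left_eq_right H₁ u v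
  have hs₂ : ∀ u v : V, ⟪P₂ u, v⟫ = ⟪u, P₂ v⟫ := by
    intro u v
    rw [hP₂ u, hP₂ v]
    exact Submodule.inner_starProjection_left_eq_right H₂ u v
  have hAv : ∀ v, A v = v - P₁ v - P₂ v + P₁ (P₂ v) + P₂ (P₁ v) := by
    intro v
    rw [hAdef]
    simp
  have hT₁sym : (P₂ ∘ₗ P₁ ∘ₗ P₂).IsSymmetric := by
    intro x y
    simp only [LinearMap.comp_apply]
    rw [hs₂, hs₁, hs₂]
  have hT₂sym : (A - P₂ ∘ₗ P₁ ∘ₗ P₂).IsSymmetric := by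
    intro x y
    simp only [LinearMap.sub_apply, inner_sub_left, inner_sub_right, hAsym x y, hT₁sym x y]
  set μA : Fin (Module.finrank ℂ V) → ℝ :=
    hAsym.eigenvalues (n := Module.finrank ℂ V) rfl with hμA
  set μ₁ : Fin (Module.finrank ℂ V) → ℝ :=
    hT₁sym.eigenvalues (n := Module.finrank ℂ V) rfl with hμ₁
  set μ₂ : Fin (Module.finrank ℂ V) → ℝ :=
    hT₂sym.eigenvalues (n := Module.finrank ℂ V) rfl with hμ₂
  -- multiset identities
  have hms21 : msOf μ₂ = msOf μ₁ := by
    apply Multiset.ext.mpr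
    intro x
    rw [msOf_count, msOf_count]
    split_ifs with h
    · rfl
    · push_neg at h
      have hx0 : (x : ℂ) ≠ 0 := by exact_mod_cast h.1
      have hx1 : (x : ℂ) ≠ 1 := by exact_mod_cast h.2
      rw [← aux_finrank_eigenspace _ hT₂sym x, ← aux_finrank_eigenspace _ hT₁sym x]
      exact le_antisymm (inj2 P₁ P₂ A hi₁ hi₂ hAv hx0 hx1) (inj1 P₁ P₂ A hi₁ hi₂ hAv hx0 hx1)
  have hmsA : msOf μA = msOf μ₁ + msOf μ₂ := by
    apply Multiset.ext.mpr
    intro x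
    rw [Multiset.count_add, msOf_count, msOf_count, msOf_count]
    split_ifs with h
    · rfl
    · push_neg at h
      have hx0 : (x : ℂ) ≠ 0 := by exact_mod_cast h.1
      rw [← aux_finrank_eigenspace _ hAsym x, ← aux_finrank_eigenspace _ hT₂sym x,
        ← aux_finrank_eigenspace _ hT₁sym x]
      exact sumEig P₁ P₂ A hi₁ hi₂ hAv hx0
  have hdA : detStar A hAsym = ((msOf μ₁).prod) ^ 2 := by
    have h1 : detStar A hAsym = ∏ i ∈ Finset.univ.filter (fun i => μA i ≠ 0), μA i := by
      rw [detStar]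
    rw [h1, prod_filter_ne_zero_eq_msOf_prod μA, hmsA, Multiset.prod_add, hms21, sq]
  -- subspaces and fixed points
  have hfixW : ∀ x : V, x ∈ LinearMap.range (P₂ ∘ₗ P₁) → P₂ x = x := by
    rintro x ⟨y, rfl⟩
    simp only [LinearMap.comp_apply, hi₂]
  have hfixW₂ : ∀ x : V, x ∈ LinearMap.range (P₁ ∘ₗ P₂) → P₁ x = x := by
    rintro x ⟨y, rfl⟩
    simp only [LinearMap.comp_apply, hi₁]
  -- eigenbasis of T₁
  set b1 : OrthonormalBasis (Fin (Module.finrank ℂ V)) ℂ V :=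
    hT₁sym.eigenvectorBasis (n := Module.finrank ℂ V) rfl with hb1
  have hb1ev : ∀ i, (P₂ ∘ₗ P₁ ∘ₗ P₂) (b1 i) = (μ₁ i : ℂ) • b1 i := fun i =>
    hT₁sym.apply_eigenvectorBasis rfl i
  have hmemW : ∀ i : Fin (Module.finrank ℂ V), μ₁ i ≠ 0 → b1 i ∈ LinearMap.range (P₂ ∘ₗ P₁) := by
    intro i hi
    refine ⟨((μ₁ i : ℂ))⁻¹ • P₂ (b1 i), ?_⟩
    have hne : (μ₁ i : ℂ) ≠ 0 := by exact_mod_cast hi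
    rw [LinearMap.comp_apply, map_smul, map_smul]
    have : P₂ (P₁ (P₂ (b1 i))) = (μ₁ i : ℂ) • b1 i := hb1ev i
    rw [this, smul_smul, inv_mul_cancel₀ hne, one_smul]
  have hzero : ∀ i : Fin (Module.finrank ℂ V), μ₁ i = 0 → P₁ (P₂ (b1 i)) = 0 := by
    intro i hi
    have h0 : (P₂ ∘ₗ P₁ ∘ₗ P₂) (b1 i) = 0 := by rw [hb1ev i, hi]; simp
    have : ⟪P₁ (P₂ (b1 i)), P₁ (P₂ (b1 i))⟫ = 0 := by
      have e1 : ⟪P₂ (P₁ (P₂ (b1 i))), b1 i⟫ = 0 := by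
        have := congrArg (fun z => ⟪z, b1 i⟫) h0
        simpa [LinearMap.comp_apply] using this
      calc ⟪P₁ (P₂ (b1 i)), P₁ (P₂ (b1 i))⟫
          = ⟪P₁ (P₁ (P₂ (b1 i))), P₂ (b1 i)⟫ := by rw [hs₁ (P₁ (P₂ (b1 i))) (P₂ (b1 i))]
        _ = ⟪P₁ (P₂ (b1 i)), P₂ (b1 i)⟫ := by rw [hi₁]
        _ = ⟪P₂ (P₁ (P₂ (b1 i))), b1 i⟫ := by rw [hs₂]
        _ = 0 := e1
    exact inner_self_eq_zero.mp this
  -- span fact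
  have hspan : Submodule.span ℂ (Set.range (fun i : {i // μ₁ i ≠ 0} => b1 i.1)) =
      LinearMap.range (P₂ ∘ₗ P₁) := by
    apply le_antisymm
    · rw [Submodule.span_le]
      rintro x ⟨i, rfl⟩
      exact hmemW i.1 i.2
    · rintro x ⟨y, rfl⟩
      have hxv : (P₂ ∘ₗ P₁) y = ∑ i, b1.repr ((P₂ ∘ₗ P₁) y) i • b1 i :=
        (b1.sum_repr ((P₂ ∘ₗ P₁) y)).symm
      rw [hxv]
      apply Submodule.sum_mem
      intro i _
      by_cases hi : μ₁ i = 0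
      · have hco : b1.repr ((P₂ ∘ₗ P₁) y) i = 0 := by
          rw [b1.repr_apply_apply]
          calc ⟪b1 i, (P₂ ∘ₗ P₁) y⟫ = ⟪P₂ (b1 i), P₁ y⟫ := by
                rw [LinearMap.comp_apply, hs₂]
          _ = ⟪P₁ (P₂ (b1 i)), y⟫ := by rw [hs₁]
          _ = 0 := by rw [hzero i hi, inner_zero_left]
        rw [hco, zero_smul]
        exact Submodule.zero_mem _
      · apply Submodule.smul_mem
        apply Submodule.subset_span
        exact ⟨⟨i, hi⟩, rfl⟩
  -- orthonormal basis of W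
  let gfam : {i // μ₁ i ≠ 0} → LinearMap.range (P₂ ∘ₗ P₁) :=
    fun i => ⟨b1 i.1, hmemW i.1 i.2⟩
  have horth : Orthonormal ℂ gfam := by
    rw [orthonormal_iff_ite]
    intro i j
    have h := orthonormal_iff_ite.mp b1.orthonormal i.1 j.1
    have hcoe : (inner ℂ (gfam i) (gfam j) : ℂ) = ⟪b1 i.1, b1 j.1⟫ := rfl
    rw [hcoe, h]
    by_cases hij : i = j
    · simp [hij]
    · have : i.1 ≠ j.1 := fun hc => hij (Subtype.ext hc)
      simp [hij, this]
  have hspan' : ⊤ ≤ Submodule.span ℂ (Set.range gfam) := by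
    have hmap : Submodule.map (LinearMap.range (P₂ ∘ₗ P₁)).subtype
        (Submodule.span ℂ (Set.range gfam)) =
        Submodule.map (LinearMap.range (P₂ ∘ₗ P₁)).subtype ⊤ := by
      rw [Submodule.map_span, ← Set.range_comp]
      have : (LinearMap.range (P₂ ∘ₗ P₁)).subtype ∘ gfam = fun i : {i // μ₁ i ≠ 0} => b1 i.1 :=
        rfl
      rw [this, hspan, Submodule.map_top, Submodule.range_subtype]
    have := Submodule.map_injective_of_injective
      (LinearMap.range (P₂ ∘ₗ P₁)).injective_subtype hmap
    rw [this]
  let c₁ : OrthonormalBasis {i // μ₁ i ≠ 0} ℂ (LinearMap.range (P₂ ∘ₗ P₁)) :=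
    OrthonormalBasis.mk horth hspan'
  have hcard : Fintype.card {i // μ₁ i ≠ 0} = Fintype.card ι := by
    have e1 := Module.finrank_eq_card_basis c₁.toBasis
    have e2 := Module.finrank_eq_card_basis b₁.toBasis
    rw [e1] at e2
    exact e2
  let e : {i // μ₁ i ≠ 0} ≃ ι := Fintype.equivOfCardEq hcard
  let c : OrthonormalBasis ι ℂ (LinearMap.range (P₂ ∘ₗ P₁)) := c₁.reindex e
  have hcval : ∀ i : ι, (c i : V) = b1 (e.symm i).1 := by
    intro i
    show ((c₁.reindex e) i : V) = _
    rw [OrthonormalBasis.coe_reindex]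
    show ((OrthonormalBasis.mk horth hspan') (e.symm i) : V) = _
    rw [OrthonormalBasis.coe_mk]
  set ν : ι → ℝ := fun i => μ₁ (e.symm i).1 with hν
  have hν0 : ∀ i, ν i ≠ 0 := fun i => (e.symm i).2
  -- diagonal matrix for f₂ ∘ f₁
  have hdiag : LinearMap.toMatrix c.toBasis c.toBasis (f₂ ∘ₗ f₁) =
      Matrix.diagonal (fun i => (ν i : ℂ)) := by
    apply aux_toMatrix_diagonal
    intro i
    rw [OrthonormalBasis.coe_toBasis]
    apply Subtype.ext
    have h1 : ((f₂ ∘ₗ f₁) (c i) : V) = P₂ (P₁ (c i : V)) := by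
      rw [LinearMap.comp_apply, hf₂, hf₁]
    rw [h1, hcval i]
    have h2 : P₂ (b1 (e.symm i).1) = b1 (e.symm i).1 :=
      hfixW _ (hmemW _ (e.symm i).2)
    calc P₂ (P₁ (b1 (e.symm i).1)) = (P₂ ∘ₗ P₁ ∘ₗ P₂) (b1 (e.symm i).1) := by
          rw [LinearMap.comp_apply, LinearMap.comp_apply, h2]
    _ = (μ₁ (e.symm i).1 : ℂ) • b1 (e.symm i).1 := hb1ev _
    _ = ((ν i : ℂ) • c i : V) := by simp only [hν, Submodule.coe_smul, hcval i]
  -- entry formulas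
  have hentry₁ : ∀ (u : OrthonormalBasis ι ℂ (LinearMap.range (P₂ ∘ₗ P₁)))
      (w : OrthonormalBasis ι ℂ (LinearMap.range (P₁ ∘ₗ P₂))) (k i : ι),
      LinearMap.toMatrix u.toBasis w.toBasis f₁ k i = ⟪(w k : V), (u i : V)⟫ := by
    intro u w k i
    rw [LinearMap.toMatrix_apply, OrthonormalBasis.coe_toBasis,
      OrthonormalBasis.coe_toBasis_repr_apply, OrthonormalBasis.repr_apply_apply]
    have h1 : (inner ℂ (w k) (f₁ (u i)) : ℂ) = ⟪(w k : V), (f₁ (u i) : V)⟫ := rfl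
    rw [h1, hf₁]
    calc ⟪(w k : V), P₁ (u i : V)⟫ = ⟪P₁ (w k : V), (u i : V)⟫ := (hs₁ _ _).symm
    _ = ⟪(w k : V), (u i : V)⟫ := by rw [hfixW₂ _ (w k).2]
  have hentry₂ : ∀ (u : OrthonormalBasis ι ℂ (LinearMap.range (P₂ ∘ₗ P₁)))
      (w : OrthonormalBasis ι ℂ (LinearMap.range (P₁ ∘ₗ P₂))) (k i : ι),
      LinearMap.toMatrix w.toBasis u.toBasis f₂ k i = ⟪(u k : V), (w i : V)⟫ := by
    intro u w k i
    rw [LinearMap.toMatrix_apply, OrthonormalBasis.coe_toBasis,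
      OrthonormalBasis.coe_toBasis_repr_apply, OrthonormalBasis.repr_apply_apply]
    have h1 : (inner ℂ (u k) (f₂ (w i)) : ℂ) = ⟪(u k : V), (f₂ (w i) : V)⟫ := rfl
    rw [h1, hf₂]
    calc ⟪(u k : V), P₂ (w i : V)⟫ = ⟪P₂ (u k : V), (w i : V)⟫ := (hs₂ _ _).symm
    _ = ⟪(u k : V), (w i : V)⟫ := by rw [hfixW _ (u k).2]
  have hconj : ∀ (u : OrthonormalBasis ι ℂ (LinearMap.range (P₂ ∘ₗ P₁)))
      (w : OrthonormalBasis ι ℂ (LinearMap.range (P₁ ∘ₗ P₂))),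
      LinearMap.toMatrix w.toBasis u.toBasis f₂ =
        (LinearMap.toMatrix u.toBasis w.toBasis f₁)ᴴ := by
    intro u w
    ext k i
    rw [hentry₂, Matrix.conjTranspose_apply, hentry₁]
    exact (inner_conj_symm _ _).symm
  -- matrix chain
  set Mc := LinearMap.toMatrix c.toBasis b₂.toBasis f₁ with hMc
  have hprodM : Mcᴴ * Mc = Matrix.diagonal (fun i => (ν i : ℂ)) := by
    rw [hMc, ← hconj c b₂, ← LinearMap.toMatrix_comp c.toBasis b₂.toBasis c.toBasis f₂ f₁, hdiag]
  have hdet1 : star Mc.det * Mc.det = ∏ i, (ν i : ℂ) := by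
    have h := congrArg Matrix.det hprodM
    rwa [Matrix.det_mul, Matrix.det_conjTranspose, Matrix.det_diagonal] at h
  have habs2 : ‖Mc.det‖ ^ 2 = ∏ i, ν i := by
    have h2 : ((Complex.normSq Mc.det : ℝ) : ℂ) = ((∏ i, ν i : ℝ) : ℂ) := by
      rw [← Complex.mul_conj, mul_comm]
      rw [Complex.ofReal_prod]
      rw [← hdet1]
      rfl
    have h3 : Complex.normSq Mc.det = ∏ i, ν i := Complex.ofReal_inj.mp h2
    rw [Complex.sq_norm, h3]
  have hprodν : ∏ i, ν i = (msOf μ₁).prod := by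
    rw [← prod_filter_ne_zero_eq_msOf_prod μ₁]
    have h1 : ∏ i, ν i = ∏ j : {i // μ₁ i ≠ 0}, μ₁ j.1 :=
      Equiv.prod_comp e.symm (fun j : {i // μ₁ i ≠ 0} => μ₁ j.1)
    rw [h1]
    exact (Finset.prod_subtype _ (by intro x; simp) _).symm
  have habsMb : ‖(LinearMap.toMatrix b₁.toBasis b₂.toBasis f₁).det‖
      = ‖Mc.det‖ := by
    have hsplit : LinearMap.toMatrix b₁.toBasis b₂.toBasis f₁ =
        Mc * LinearMap.toMatrix b₁.toBasis c.toBasis LinearMap.id := by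
      rw [hMc, ← LinearMap.toMatrix_comp b₁.toBasis c.toBasis b₂.toBasis f₁ LinearMap.id,
        LinearMap.comp_id]
    rw [hsplit, Matrix.det_mul, norm_mul, LinearMap.toMatrix_id_eq_basis_toMatrix,
      aux_unitary_det c b₁, mul_one]
  have habsMb' : ‖(LinearMap.toMatrix b₂'.toBasis b₁'.toBasis f₂).det‖
      = ‖Mc.det‖ := by
    have hsplit2 : LinearMap.toMatrix b₂'.toBasis b₁'.toBasis f₂ =
        LinearMap.toMatrix c.toBasis b₁'.toBasis LinearMap.id *
          (Mcᴴ * LinearMap.toMatrix b₂'.toBasis b₂.toBasis LinearMap.id) := by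
      rw [hMc, ← hconj c b₂]
      rw [← LinearMap.toMatrix_comp b₂'.toBasis b₂.toBasis c.toBasis f₂ LinearMap.id]
      rw [← LinearMap.toMatrix_comp b₂'.toBasis c.toBasis b₁'.toBasis LinearMap.id
        (f₂ ∘ₗ LinearMap.id)]
      rw [LinearMap.comp_id, LinearMap.id_comp]
    rw [hsplit2, Matrix.det_mul, Matrix.det_mul, norm_mul, norm_mul,
      LinearMap.toMatrix_id_eq_basis_toMatrix, LinearMap.toMatrix_id_eq_basis_toMatrix,
      aux_unitary_det b₁' c, aux_unitary_det b₂ b₂', Matrix.det_conjTranspose, one_mul, mul_one]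
    exact norm_star _
  refine ⟨by rw [habsMb, habsMb'], ?_⟩
  have hr2 : ‖Mc.det‖ ^ 2 = (msOf μ₁).prod := by rw [habs2, hprodν]
  have hdA4 : detStar A hAsym = ‖Mc.det‖ ^ 4 := by
    rw [hdA, ← hr2]; ring
  rw [habsMb, hdA4]
  have hrnn : (0:ℝ) ≤ ‖Mc.det‖ := norm_nonneg _
  rw [show (‖Mc.det‖ ^ 4 : ℝ) = ‖Mc.det‖ ^ ((4:ℕ):ℝ) from by
    rw [Real.rpow_natCast]]
  rw [← Real.rpow_mul hrnn]
  norm_num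
end

section
/- Let V be a finite-dimensional complex inner product space, H₁, H₂ ⊆ V subspaces with orthogonal projections P₁, P₂. For λ ∈ [0,1], let H₁^λ ⊆ H₁ and H₂^λ ⊆ H₂ denote the λ-eigenspaces of P₁P₂P₁|_{H₁} and P₂P₁P₂|_{H₂} respectively. Then V admits the orthogonal decomposition V = (H₁+H₂)^⊥ ⊕ (H₁∩H₂) ⊕ (H₁∩H₂^⊥) ⊕ (H₂∩H₁^⊥) ⊕ ⊕_{0<λ<1} (H₁^λ + H₂^λ), and each summand is invariant under both P₁ and P₂. -/
open Module LinearMap Submodule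

/-- The `t`-eigenspace of an operator `T` intersected with `H`, as a submodule of the
ambient space: for subspaces `H₁, H₂` with projections `P₁, P₂`, taking `H = H₁` and
`T = P₁ ∘ P₂` this is the `t`-eigenspace `H₁ᵗ` of `P₁P₂P₁|_{H₁}`. -/
noncomputable def eigPart {V : Type*} [NormedAddCommGroup V] [InnerProductSpace ℂ V]
    (H : Submodule ℂ V) (T : V →ₗ[ℂ] V) (t : ℝ) : Submodule ℂ V :=
  H ⊓ LinearMap.ker (T - (t : ℂ) • LinearMap.id)

section Aux

variable {V : Type*} [NormedAddCommGroup V] [InnerProductSpace ℂ V]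

local notation "⟪" x ", " y "⟫" => @inner ℂ _ _ x y

variable {K L : Submodule ℂ V} {P Q : V →ₗ[ℂ] V}

lemma mem_eigPart {H : Submodule ℂ V} {T : V →ₗ[ℂ] V} {t : ℝ} {x : V} :
    x ∈ eigPart H T t ↔ x ∈ H ∧ T x = (t : ℂ) • x := by
  simp only [eigPart, Submodule.mem_inf, LinearMap.mem_ker, LinearMap.sub_apply,
    LinearMap.smul_apply, LinearMap.id_apply, sub_eq_zero]

section ProjBasic

variable [HasOrthogonalProjection K] [HasOrthogonalProjection L]
variable (hP : ∀ v : V, P v = (orthogonalProjection K v : V))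
variable (hQ : ∀ v : V, Q v = (orthogonalProjection L v : V))

include hP in
lemma proj_inner (u v : V) : ⟪P u, v⟫ = ⟪u, P v⟫ := by
  rw [hP, hP]; exact inner_starProjection_left_eq_right K u v

include hP in
lemma proj_mem (v : V) : P v ∈ K := by
  rw [hP]; exact (orthogonalProjection K v).2

include hP in
lemma proj_eq_self {v : V} (hv : v ∈ K) : P v = v := by
  rw [hP]; exact starProjection_eq_self_iff.mpr hv

include hQ in
lemma proj_idem (v : V) : Q (Q v) = Q v :=
  proj_eq_self hQ (proj_mem hQ v)

include hQ in
lemma inner_self_proj (x : V) : ⟪x, Q x⟫ = ⟪Q x, Q x⟫ := by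
  conv_lhs => rw [← proj_idem hQ x]
  exact (proj_inner hQ x (Q x)).symm

include hP hQ in
lemma pq_symm {x y : V} (hx : x ∈ K) (hy : y ∈ K) :
    ⟪P (Q x), y⟫ = ⟪x, P (Q y)⟫ := by
  calc ⟪P (Q x), y⟫ = ⟪Q x, P y⟫ := proj_inner hP (Q x) y
    _ = ⟪Q x, y⟫ := by rw [proj_eq_self hP hy]
    _ = ⟪x, Q y⟫ := proj_inner hQ x y
    _ = ⟪P x, Q y⟫ := by rw [proj_eq_self hP hx]
    _ = ⟪x, P (Q y)⟫ := proj_inner hP x (Q y)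

include hP hQ in
/-- Orthogonality of eigenvectors on the same side. -/
lemma orthoA {x y : V} {s t : ℝ} (hx : x ∈ K) (hxe : P (Q x) = (s : ℂ) • x)
    (hy : y ∈ K) (hye : P (Q y) = (t : ℂ) • y) (hst : s ≠ t) : ⟪x, y⟫ = 0 := by
  have h1 : ⟪P (Q x), y⟫ = (s : ℂ) * ⟪x, y⟫ := by
    rw [hxe, inner_smul_left, Complex.conj_ofReal]
  have h2 : ⟪x, P (Q y)⟫ = (t : ℂ) * ⟪x, y⟫ := by
    rw [hye, inner_smul_right]
  have h3 := pq_symm hP hQ hx hy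
  rw [h1, h2] at h3
  have hst' : (s : ℂ) ≠ (t : ℂ) := by exact_mod_cast hst
  rcases mul_eq_mul_right_iff.mp h3 with h | h
  · exact absurd h hst'
  · exact h

include hP hQ in
/-- Orthogonality of eigenvectors on opposite sides with distinct eigenvalues. -/
lemma orthoB {x y : V} {s t : ℝ} (hx : x ∈ K) (hxe : P (Q x) = (s : ℂ) • x)
    (hy : y ∈ L) (hye : Q (P y) = (t : ℂ) • y) (hst : s ≠ t) : ⟪x, y⟫ = 0 := by
  have h1 : ⟪P (Q x), y⟫ = (s : ℂ) * ⟪x, y⟫ := by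
    rw [hxe, inner_smul_left, Complex.conj_ofReal]
  have h2 : ⟪x, Q (P y)⟫ = (t : ℂ) * ⟪x, y⟫ := by
    rw [hye, inner_smul_right]
  have h3 : ⟪P (Q x), y⟫ = ⟪x, Q (P y)⟫ := by
    calc ⟪P (Q x), y⟫ = ⟪Q x, P y⟫ := proj_inner hP (Q x) y
      _ = ⟪x, Q (P y)⟫ := proj_inner hQ x (P y)
  rw [h1, h2] at h3
  have hst' : (s : ℂ) ≠ (t : ℂ) := by exact_mod_cast hst
  rcases mul_eq_mul_right_iff.mp h3 with h | h
  · exact absurd h hst'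
  · exact h

include hP hQ in
lemma inner_pq_self {x : V} (hx : x ∈ K) :
    ⟪x, P (Q x)⟫ = (‖Q x‖ : ℂ) ^ 2 := by
  calc ⟪x, P (Q x)⟫ = ⟪P x, Q x⟫ := (proj_inner hP x (Q x)).symm
    _ = ⟪x, Q x⟫ := by rw [proj_eq_self hP hx]
    _ = ⟪Q x, Q x⟫ := inner_self_proj hQ x
    _ = (‖Q x‖ : ℂ) ^ 2 := inner_self_eq_norm_sq_to_K (Q x)

include hP hQ in
/-- Analysis of an eigenvector of `P ∘ Q` in `K`. -/
lemma eig_cases {x : V} {μ : ℂ} (hx : x ∈ K) (heig : P (Q x) = μ • x) :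
    x ∈ K ⊓ L ∨ x ∈ K ⊓ Lᗮ ∨
      ∃ t : ℝ, 0 < t ∧ t < 1 ∧ x ∈ eigPart K (P ∘ₗ Q) t := by
  rcases eq_or_ne x 0 with rfl | hx0
  · exact Or.inl (zero_mem _)
  have hμ : μ * (‖x‖ : ℂ) ^ 2 = (‖Q x‖ : ℂ) ^ 2 := by
    have := inner_pq_self hP hQ hx
    rw [heig, inner_smul_right, inner_self_eq_norm_sq_to_K] at this
    exact this
  have hx' : (‖x‖ : ℂ) ^ 2 ≠ 0 := by
    simpa using hx0
  have hμval : μ = ((‖Q x‖ ^ 2 / ‖x‖ ^ 2 : ℝ) : ℂ) := by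
    push_cast
    rw [eq_div_iff hx']
    exact hμ
  set t : ℝ := ‖Q x‖ ^ 2 / ‖x‖ ^ 2 with ht
  have hxpos : (0 : ℝ) < ‖x‖ ^ 2 := pow_pos (norm_pos_iff.mpr hx0) 2
  have ht0 : 0 ≤ t := by positivity
  have hnormsq := norm_sq_eq_add_norm_sq_projection x L
  simp only [Submodule.coe_norm] at hnormsq
  have hqle : ‖Q x‖ ^ 2 ≤ ‖x‖ ^ 2 := by
    rw [hQ]
    nlinarith [sq_nonneg ‖((orthogonalProjection Lᗮ) x : V)‖]
  have ht1 : t ≤ 1 := by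
    rw [ht, div_le_one hxpos]; exact hqle
  rcases eq_or_lt_of_le ht0 with h0 | h0
  · -- t = 0 : Q x = 0, x ∈ Lᗮ
    have hq0 : ‖Q x‖ ^ 2 = 0 := by
      have : t * ‖x‖ ^ 2 = ‖Q x‖ ^ 2 := by
        rw [ht]; field_simp
      rw [← this, ← h0, zero_mul]
    have hq0' : Q x = 0 := by
      have := pow_eq_zero_iff (n := 2) (by norm_num) |>.mp hq0
      simpa using this
    refine Or.inr (Or.inl ⟨hx, ?_⟩)
    have hz : orthogonalProjection L x = 0 :=
      Submodule.coe_eq_zero.mp (by rw [← hQ]; exact hq0')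
    exact orthogonalProjection_eq_zero_iff.mp hz
  rcases eq_or_lt_of_le ht1 with h1 | h1
  · -- t = 1 : x ∈ L
    have hq1 : ‖Q x‖ ^ 2 = ‖x‖ ^ 2 := by
      have : t * ‖x‖ ^ 2 = ‖Q x‖ ^ 2 := by rw [ht]; field_simp
      rw [← this, h1, one_mul]
    have hperp : ‖((orthogonalProjection Lᗮ) x : V)‖ ^ 2 = 0 := by
      rw [hQ] at hq1
      nlinarith [hnormsq]
    have hperp0 : ((orthogonalProjection Lᗮ) x : V) = 0 := by
      have := pow_eq_zero_iff (n := 2) (by norm_num) |>.mp hperp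
      simpa using this
    have hxL : x ∈ Lᗮᗮ :=
      orthogonalProjection_eq_zero_iff.mp (Submodule.coe_eq_zero.mp hperp0)
    rw [Submodule.orthogonal_orthogonal] at hxL
    exact Or.inl ⟨hx, hxL⟩
  · refine Or.inr (Or.inr ⟨t, h0, h1, mem_eigPart.mpr ⟨hx, ?_⟩⟩)
    rw [LinearMap.comp_apply, heig, hμval]

end ProjBasic

end Aux

theorem statement3 {V : Type*} [NormedAddCommGroup V] [InnerProductSpace ℂ V]
    [FiniteDimensional ℂ V] (H₁ H₂ : Submodule ℂ V)
    (P₁ P₂ : V →ₗ[ℂ] V)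
    (hP₁ : ∀ v : V, P₁ v = (orthogonalProjection H₁ v : V))
    (hP₂ : ∀ v : V, P₂ v = (orthogonalProjection H₂ v : V)) :
    let W : Fin 4 ⊕ {t : ℝ // 0 < t ∧ t < 1} → Submodule ℂ V :=
      Sum.elim
        ![(H₁ ⊔ H₂)ᗮ, H₁ ⊓ H₂, H₁ ⊓ H₂ᗮ, H₂ ⊓ H₁ᗮ]
        (fun t => eigPart H₁ (P₁ ∘ₗ P₂) t.1 ⊔ eigPart H₂ (P₂ ∘ₗ P₁) t.1)
    (∀ i j, i ≠ j → W i ≤ (W j)ᗮ) ∧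
    (⨆ i, W i) = ⊤ ∧
    (∀ i, (W i).map P₁ ≤ W i ∧ (W i).map P₂ ≤ W i) := by
  intro W
  -- abbreviations for the eigenspace parts
  set E₁ : ℝ → Submodule ℂ V := fun t => eigPart H₁ (P₁ ∘ₗ P₂) t with hE₁
  set E₂ : ℝ → Submodule ℂ V := fun t => eigPart H₂ (P₂ ∘ₗ P₁) t with hE₂
  have memE₁ : ∀ {x : V} {t : ℝ}, x ∈ E₁ t ↔ x ∈ H₁ ∧ P₁ (P₂ x) = (t : ℂ) • x := by
    intro x t; rw [hE₁]; exact mem_eigPart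
  have memE₂ : ∀ {x : V} {t : ℝ}, x ∈ E₂ t ↔ x ∈ H₂ ∧ P₂ (P₁ x) = (t : ℂ) • x := by
    intro x t; rw [hE₂]; exact mem_eigPart
  -- basic projection facts
  have pe₁ : ∀ {v : V}, v ∈ H₁ → P₁ v = v := fun h => proj_eq_self hP₁ h
  have pe₂ : ∀ {v : V}, v ∈ H₂ → P₂ v = v := fun h => proj_eq_self hP₂ h
  have pz₁ : ∀ {v : V}, v ∈ H₁ᗮ → P₁ v = 0 := by
    intro v hv
    rw [hP₁, orthogonalProjection_mem_subspace_orthogonalComplement_eq_zero hv,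
      Submodule.coe_zero]
  have pz₂ : ∀ {v : V}, v ∈ H₂ᗮ → P₂ v = 0 := by
    intro v hv
    rw [hP₂, orthogonalProjection_mem_subspace_orthogonalComplement_eq_zero hv,
      Submodule.coe_zero]
  have pm₁ : ∀ v : V, P₁ v ∈ H₁ := proj_mem hP₁
  have pm₂ : ∀ v : V, P₂ v ∈ H₂ := proj_mem hP₂
  -- the four fixed pieces as eigenvectors
  have eB₁ : ∀ {v : V}, v ∈ H₁ ⊓ H₂ → P₁ (P₂ v) = ((1 : ℝ) : ℂ) • v := by
    intro v hv; rw [pe₂ hv.2, pe₁ hv.1]; simp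
  have eB₂ : ∀ {v : V}, v ∈ H₁ ⊓ H₂ → P₂ (P₁ v) = ((1 : ℝ) : ℂ) • v := by
    intro v hv; rw [pe₁ hv.1, pe₂ hv.2]; simp
  have eC₁ : ∀ {v : V}, v ∈ H₁ ⊓ H₂ᗮ → P₁ (P₂ v) = ((0 : ℝ) : ℂ) • v := by
    intro v hv; rw [pz₂ hv.2, map_zero]; simp
  have eD₂ : ∀ {v : V}, v ∈ H₂ ⊓ H₁ᗮ → P₂ (P₁ v) = ((0 : ℝ) : ℂ) • v := by
    intro v hv; rw [pz₁ hv.2, map_zero]; simp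
  -- orthogonality of a "same-side/cross-side eigenvector" to an eigen-pair part
  -- (x ∈ H₁ with eigenvalue s, against E₁ t ⊔ E₂ t, s ≠ t)
  have ortho₁E : ∀ {s : ℝ} {x : V}, x ∈ H₁ → P₁ (P₂ x) = (s : ℂ) • x →
      ∀ t : ℝ, s ≠ t → (Submodule.span ℂ {x}) ⟂ (E₁ t ⊔ E₂ t) := by
    intro s x hx hxe t hst
    rw [Submodule.isOrtho_sup_right]
    constructor <;> rw [Submodule.isOrtho_iff_inner_eq] <;>
      intro u hu v hv
    · obtain ⟨hv1, hv2⟩ := memE₁.mp hv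
      obtain ⟨c, rfl⟩ := Submodule.mem_span_singleton.mp hu
      rw [inner_smul_left, orthoA hP₁ hP₂ hx hxe hv1 hv2 hst, mul_zero]
    · obtain ⟨hv1, hv2⟩ := memE₂.mp hv
      obtain ⟨c, rfl⟩ := Submodule.mem_span_singleton.mp hu
      rw [inner_smul_left, orthoB hP₁ hP₂ hx hxe hv1 hv2 hst, mul_zero]
  have ortho₂E : ∀ {s : ℝ} {x : V}, x ∈ H₂ → P₂ (P₁ x) = (s : ℂ) • x →
      ∀ t : ℝ, s ≠ t → (Submodule.span ℂ {x}) ⟂ (E₁ t ⊔ E₂ t) := by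
    intro s x hx hxe t hst
    rw [Submodule.isOrtho_sup_right]
    constructor <;> rw [Submodule.isOrtho_iff_inner_eq] <;>
      intro u hu v hv
    · obtain ⟨hv1, hv2⟩ := memE₁.mp hv
      obtain ⟨c, rfl⟩ := Submodule.mem_span_singleton.mp hu
      rw [inner_smul_left, orthoB hP₂ hP₁ hx hxe hv1 hv2 hst, mul_zero]
    · obtain ⟨hv1, hv2⟩ := memE₂.mp hv
      obtain ⟨c, rfl⟩ := Submodule.mem_span_singleton.mp hu
      rw [inner_smul_left, orthoA hP₂ hP₁ hx hxe hv1 hv2 hst, mul_zero]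
  -- evaluation of W
  have hW0 : W (Sum.inl 0) = (H₁ ⊔ H₂)ᗮ := rfl
  have hW1 : W (Sum.inl 1) = H₁ ⊓ H₂ := rfl
  have hW2 : W (Sum.inl 2) = H₁ ⊓ H₂ᗮ := rfl
  have hW3 : W (Sum.inl 3) = H₂ ⊓ H₁ᗮ := rfl
  have hWE : ∀ t, W (Sum.inr t) = E₁ t.1 ⊔ E₂ t.1 := fun t => rfl
  have hEle : ∀ t : {t : ℝ // 0 < t ∧ t < 1}, E₁ t.1 ⊔ E₂ t.1 ≤ H₁ ⊔ H₂ :=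
    fun t => sup_le_sup (inf_le_left : E₁ t.1 ≤ H₁) (inf_le_left : E₂ t.1 ≤ H₂)
  -- pairwise orthogonality facts
  have o01 : (H₁ ⊔ H₂)ᗮ ⟂ (H₁ ⊓ H₂) :=
    (Submodule.isOrtho_orthogonal_left _).mono_right (inf_le_left.trans le_sup_left)
  have o02 : (H₁ ⊔ H₂)ᗮ ⟂ (H₁ ⊓ H₂ᗮ) :=
    (Submodule.isOrtho_orthogonal_left _).mono_right (inf_le_left.trans le_sup_left)
  have o03 : (H₁ ⊔ H₂)ᗮ ⟂ (H₂ ⊓ H₁ᗮ) :=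
    (Submodule.isOrtho_orthogonal_left _).mono_right (inf_le_left.trans le_sup_right)
  have o0E : ∀ t : {t : ℝ // 0 < t ∧ t < 1}, (H₁ ⊔ H₂)ᗮ ⟂ (E₁ t.1 ⊔ E₂ t.1) :=
    fun t => (Submodule.isOrtho_orthogonal_left _).mono_right (hEle t)
  have o12 : (H₁ ⊓ H₂) ⟂ (H₁ ⊓ H₂ᗮ) :=
    (Submodule.isOrtho_orthogonal_right H₂).mono inf_le_right inf_le_right
  have o13 : (H₁ ⊓ H₂) ⟂ (H₂ ⊓ H₁ᗮ) :=
    (Submodule.isOrtho_orthogonal_right H₁).mono inf_le_left inf_le_right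
  have o23 : (H₁ ⊓ H₂ᗮ) ⟂ (H₂ ⊓ H₁ᗮ) :=
    ((Submodule.isOrtho_orthogonal_right H₂).symm).mono inf_le_right inf_le_left
  have spanOrtho : ∀ {X Y : Submodule ℂ V},
      (∀ x ∈ X, Submodule.span ℂ {x} ⟂ Y) → X ⟂ Y := by
    intro X Y h
    rw [Submodule.isOrtho_iff_inner_eq]
    intro u hu v hv
    exact Submodule.isOrtho_iff_inner_eq.mp (h u hu) u
      (Submodule.mem_span_singleton_self u) v hv
  have o1E : ∀ t : {t : ℝ // 0 < t ∧ t < 1}, (H₁ ⊓ H₂) ⟂ (E₁ t.1 ⊔ E₂ t.1) := by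
    intro t
    refine spanOrtho fun x hx => ortho₁E hx.1 (eB₁ hx) t.1 (ne_of_gt t.2.2)
  have o2E : ∀ t : {t : ℝ // 0 < t ∧ t < 1}, (H₁ ⊓ H₂ᗮ) ⟂ (E₁ t.1 ⊔ E₂ t.1) := by
    intro t
    refine spanOrtho fun x hx => ortho₁E hx.1 (eC₁ hx) t.1 (ne_of_lt t.2.1)
  have o3E : ∀ t : {t : ℝ // 0 < t ∧ t < 1}, (H₂ ⊓ H₁ᗮ) ⟂ (E₁ t.1 ⊔ E₂ t.1) := by
    intro t
    refine spanOrtho fun x hx => ortho₂E hx.1 (eD₂ hx) t.1 (ne_of_lt t.2.1)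
  have oEE : ∀ s t : {t : ℝ // 0 < t ∧ t < 1}, s ≠ t →
      (E₁ s.1 ⊔ E₂ s.1) ⟂ (E₁ t.1 ⊔ E₂ t.1) := by
    intro s t hst
    have hst' : s.1 ≠ t.1 := fun h => hst (Subtype.ext h)
    rw [Submodule.isOrtho_sup_left]
    constructor
    · refine spanOrtho fun x hx => ?_
      obtain ⟨hx1, hx2⟩ := memE₁.mp hx
      exact ortho₁E hx1 hx2 t.1 hst'
    · refine spanOrtho fun x hx => ?_
      obtain ⟨hx1, hx2⟩ := memE₂.mp hx
      exact ortho₂E hx1 hx2 t.1 hst'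
  refine ⟨?_, ?_, ?_⟩
  · -- pairwise orthogonality
    rintro (i | s) (j | t) hij
    · fin_cases i <;> fin_cases j <;>
        first
          | exact absurd rfl hij
          | exact o01 | exact o02 | exact o03 | exact o12 | exact o13 | exact o23
          | exact o01.symm | exact o02.symm | exact o03.symm
          | exact o12.symm | exact o13.symm | exact o23.symm
    · fin_cases i <;>
        first
          | exact o0E t | exact o1E t | exact o2E t | exact o3E t
    · fin_cases j <;>
        first
          | exact (o0E s).symm | exact (o1E s).symm
          | exact (o2E s).symm | exact (o3E s).symm
    · exact oEE s t (fun h => hij (congrArg Sum.inr h))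
  · -- the sum is everything
    have hUle : ∀ i, W i ≤ ⨆ i, W i := fun i => le_iSup W i
    have hside : ∀ (K L : Submodule ℂ V) (P Q : V →ₗ[ℂ] V)
        (hP : ∀ v : V, P v = (orthogonalProjection K v : V))
        (hQ : ∀ v : V, Q v = (orthogonalProjection L v : V))
        (hKL : K ⊓ L ≤ ⨆ i, W i) (hKL' : K ⊓ Lᗮ ≤ ⨆ i, W i)
        (hE : ∀ t : ℝ, 0 < t → t < 1 → eigPart K (P ∘ₗ Q) t ≤ ⨆ i, W i),
        K ≤ ⨆ i, W i := by
      intro K L P Q hP hQ hKL hKL' hE x hx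
      haveI : FiniteDimensional ℂ K := FiniteDimensional.finiteDimensional_submodule K
      have hmem : ∀ y ∈ K, (P ∘ₗ Q) y ∈ K := fun y _ => proj_mem hP (Q y)
      set T : K →ₗ[ℂ] K := (P ∘ₗ Q).restrict hmem with hT
      have hsym : T.IsSymmetric := by
        intro a b
        have := pq_symm hP hQ a.2 b.2
        simpa [hT, LinearMap.restrict_apply, Submodule.coe_inner] using this
      have htop : (⨆ μ, Module.End.eigenspace T μ) = ⊤ := by
        rw [← Submodule.orthogonal_eq_bot_iff]
        exact hsym.orthogonalComplement_iSup_eigenspaces_eq_bot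
      have hxK : (⟨x, hx⟩ : K) ∈ ⨆ μ, Module.End.eigenspace T μ := htop ▸ Submodule.mem_top
      have hmap : Submodule.map K.subtype (⨆ μ, Module.End.eigenspace T μ) ≤ ⨆ i, W i := by
        rw [Submodule.map_iSup]
        refine iSup_le fun μ => ?_
        rintro _ ⟨⟨y, hyK⟩, hy, rfl⟩
        rw [SetLike.mem_coe, Module.End.mem_eigenspace_iff] at hy
        have hy' : P (Q y) = μ • y := by
          have := congrArg (Subtype.val) hy
          simpa [hT, LinearMap.restrict_apply] using this
        rcases eig_cases hP hQ hyK hy' with h | h | ⟨t, ht0, ht1, hmem'⟩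
        · exact hKL h
        · exact hKL' h
        · exact hE t ht0 ht1 hmem'
      exact hmap ⟨⟨x, hx⟩, hxK, rfl⟩
    have h₁U : H₁ ≤ ⨆ i, W i := by
      refine hside H₁ H₂ P₁ P₂ hP₁ hP₂ ?_ ?_ ?_
      · exact hUle (Sum.inl 1)
      · exact hUle (Sum.inl 2)
      · intro t ht0 ht1
        exact le_trans le_sup_left (hUle (Sum.inr ⟨t, ht0, ht1⟩))
    have h₂U : H₂ ≤ ⨆ i, W i := by
      refine hside H₂ H₁ P₂ P₁ hP₂ hP₁ ?_ ?_ ?_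
      · exact le_trans (le_of_eq (inf_comm H₂ H₁)) (hUle (Sum.inl 1))
      · exact hW3 ▸ hUle (Sum.inl 3)
      · intro t ht0 ht1
        exact le_trans le_sup_right (hUle (Sum.inr ⟨t, ht0, ht1⟩))
    have h0U : (H₁ ⊔ H₂)ᗮ ≤ ⨆ i, W i := hUle (Sum.inl 0)
    rw [← top_le_iff, ← Submodule.sup_orthogonal_of_hasOrthogonalProjection (K := H₁ ⊔ H₂)]
    exact sup_le (sup_le h₁U h₂U) h0U
  · -- invariance
    have inv0 : ((H₁ ⊔ H₂)ᗮ).map P₁ ≤ (H₁ ⊔ H₂)ᗮ ∧ ((H₁ ⊔ H₂)ᗮ).map P₂ ≤ (H₁ ⊔ H₂)ᗮ := by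
      constructor <;> rintro _ ⟨v, hv, rfl⟩
      · rw [pz₁ (fun y hy => hv y (le_sup_left (a := H₁) (b := H₂) hy))]
        exact zero_mem _
      · rw [pz₂ (fun y hy => hv y (le_sup_right (a := H₁) (b := H₂) hy))]
        exact zero_mem _
    have inv1 : (H₁ ⊓ H₂).map P₁ ≤ H₁ ⊓ H₂ ∧ (H₁ ⊓ H₂).map P₂ ≤ H₁ ⊓ H₂ := by
      constructor <;> rintro _ ⟨v, hv, rfl⟩
      · rw [pe₁ hv.1]; exact hv
      · rw [pe₂ hv.2]; exact hv
    have inv2 : (H₁ ⊓ H₂ᗮ).map P₁ ≤ H₁ ⊓ H₂ᗮ ∧ (H₁ ⊓ H₂ᗮ).map P₂ ≤ H₁ ⊓ H₂ᗮ := by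
      constructor <;> rintro _ ⟨v, hv, rfl⟩
      · rw [pe₁ hv.1]; exact hv
      · rw [pz₂ hv.2]; exact zero_mem _
    have inv3 : (H₂ ⊓ H₁ᗮ).map P₁ ≤ H₂ ⊓ H₁ᗮ ∧ (H₂ ⊓ H₁ᗮ).map P₂ ≤ H₂ ⊓ H₁ᗮ := by
      constructor <;> rintro _ ⟨v, hv, rfl⟩
      · rw [pz₁ hv.2]; exact zero_mem _
      · rw [pe₂ hv.1]; exact hv
    rintro (i | t)
    · fin_cases i
      · exact inv0
      · exact inv1
      · exact inv2
      · exact inv3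
    · rw [hWE, Submodule.map_sup, Submodule.map_sup]
      have m11 : (E₁ t.1).map P₁ ≤ E₁ t.1 := by
        rintro _ ⟨v, hv, rfl⟩
        rw [pe₁ (memE₁.mp hv).1]; exact hv
      have m21 : (E₂ t.1).map P₁ ≤ E₁ t.1 := by
        rintro _ ⟨v, hv, rfl⟩
        obtain ⟨hv1, hv2⟩ := memE₂.mp hv
        refine memE₁.mpr ⟨pm₁ v, ?_⟩
        have := congrArg P₁ hv2
        rw [map_smul] at this
        rw [← this]
      have m22 : (E₂ t.1).map P₂ ≤ E₂ t.1 := by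
        rintro _ ⟨v, hv, rfl⟩
        rw [pe₂ (memE₂.mp hv).1]; exact hv
      have m12 : (E₁ t.1).map P₂ ≤ E₂ t.1 := by
        rintro _ ⟨v, hv, rfl⟩
        obtain ⟨hv1, hv2⟩ := memE₁.mp hv
        refine memE₂.mpr ⟨pm₂ v, ?_⟩
        have := congrArg P₂ hv2
        rw [map_smul] at this
        rw [← this]
      exact ⟨sup_le (m11.trans le_sup_left) (m21.trans le_sup_left),
        sup_le (m12.trans le_sup_right) (m22.trans le_sup_right)⟩
end
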